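/- arXiv:1904.12381 — 2 statements merged into one kernel-verified Lean document; each statement's English description precedes it below -/
import Mathlib

section
/- For a perfect field F of characteristic p with a nontrivial valuation v, and r in (0,∞), the Gauss valuation v_r defined on the bounded Witt vector ring B^bd by v_r(Σ[x_n]π^n) = inf_n (v(x_n) + n·r) is multiplicative: v_r(xy) = v_r(x) + v_r(y) for all x, y in B^bd. -/
/-!
In Witt coordinates, `a ≤ v_r x` means `(a - k r) p^k ≤ v (x_k)` for every `k`, and the `N`-th
coordinate of `x * y` is the integral polynomial `W_N = wittMul p N` evaluated at `X_k = x_k`,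
`Y_k = y_k`. The recursion `p^N W_N = w_N(X) w_N(Y) - ∑_{i<N} p^i W_i^(p^(N-i))`, where `w_N` is the
`N`-th Witt polynomial, shows that `W_N` is isobaric of weight `p^N` in the `X_k` and in the `Y_k`
(`X_k`, `Y_k` of weight `p^k`) and, keeping track of the `p`-adic valuations of coefficients, that
a monomial with coefficient prime to `p` has degree at most `N p^N` when `X_k`, `Y_k` have degree
`k p^k`. So if `a ≤ v_r x` and `b ≤ v_r y`, every monomial contributing to `(x y)_N` has valuation
at least `(a + b - N r) p^N`, whence `v_r x + v_r y ≤ v_r (x y)`.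

Conversely, if `v_r x = a` and `v_r y = b` are finite, let `i` and `j` be the first indices where
the infima are attained (they are, since `x` and `y` are bounded and `r > 0`). The monomial
`X_i^(p^j) Y_j^(p^i)` of `W_{i+j}` has coefficient `≡ 1 mod p`, as the product of `V^i [X]` and
`V^j [Y]` shows, and every other monomial with a unit coefficient involves some `X_k` with `k < i`
or `Y_k` with `k < j`, hence has strictly larger valuation. So
`v ((x y)_{i+j}) = (a + b - (i + j) r) p^(i+j)`, i.e. `v_r (x y) ≤ a + b`.
-/

open MvPolynomial Finset

namespace GaussValuation

section PAdicWeight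

variable {σ : Type*} (p : ℕ) (ω : σ → ℕ)

def IsPAdicWeightBounded (A B : ℕ) (Q : MvPolynomial σ ℤ) : Prop :=
  ∀ d m, A + m * B < Finsupp.weight ω d → (p : ℤ) ^ (m + 1) ∣ coeff d Q

namespace IsPAdicWeightBounded

variable {p ω} {A A' B B' : ℕ} {Q Q' : MvPolynomial σ ℤ}

theorem of_weight_le (h : ∀ d ∈ Q.support, Finsupp.weight ω d ≤ A) :
    IsPAdicWeightBounded p ω A B Q := by
  intro d m hd
  by_cases hQ : d ∈ Q.support
  · exact absurd ((h d hQ).trans (Nat.le_add_right A _)) hd.not_ge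
  · simp [notMem_support_iff.mp hQ]

theorem weight_le [Fact p.Prime] (h : IsPAdicWeightBounded p ω A B Q) {d : σ →₀ ℕ}
    (hd : coeff d Q ≠ 0) : Finsupp.weight ω d ≤ A + padicValInt p (coeff d Q) * B := by
  by_contra hlt
  have := (padicValInt_dvd_iff _ _).mp (h d _ (not_le.mp hlt))
  omega

theorem mono (h : IsPAdicWeightBounded p ω A B Q) (hA : A ≤ A') (hB : B ≤ B') :
    IsPAdicWeightBounded p ω A' B' Q :=
  fun d m hd => h d m (lt_of_le_of_lt (by gcongr) hd)

theorem sub (h : IsPAdicWeightBounded p ω A B Q) (h' : IsPAdicWeightBounded p ω A B Q') :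
    IsPAdicWeightBounded p ω A B (Q - Q') := fun d m hd => by
  rw [coeff_sub]
  exact dvd_sub (h d m hd) (h' d m hd)

theorem sum {ι : Type*} (s : Finset ι) {Q : ι → MvPolynomial σ ℤ}
    (h : ∀ i ∈ s, IsPAdicWeightBounded p ω A B (Q i)) :
    IsPAdicWeightBounded p ω A B (∑ i ∈ s, Q i) := fun d m hd => by
  rw [coeff_sum]
  exact dvd_sum fun i hi => h i hi d m hd

theorem C_pow_mul {k : ℕ} (h : IsPAdicWeightBounded p ω (A + k * B) B Q) :
    IsPAdicWeightBounded p ω A B (C ((p : ℤ) ^ k) * Q) := by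
  intro d m hd
  rw [coeff_C_mul]
  rcases lt_or_ge m k with hmk | hkm
  · exact (pow_dvd_pow _ hmk).mul_right _
  · obtain ⟨m, rfl⟩ := Nat.exists_eq_add_of_le hkm
    rw [add_assoc, pow_add]
    exact mul_dvd_mul_left _ (h d m (by nlinarith))

theorem of_C_pow_mul {k : ℕ} (h : IsPAdicWeightBounded p ω A B (C ((p : ℤ) ^ k) * Q))
    (hp : p ≠ 0) : IsPAdicWeightBounded p ω (A + k * B) B Q := by
  intro d m hd
  have := h d (k + m) (by nlinarith)
  rw [coeff_C_mul, add_assoc, pow_add] at this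
  exact (mul_dvd_mul_iff_left (pow_ne_zero _ (Int.natCast_ne_zero.mpr hp))).mp this

theorem mul [Fact p.Prime] (h : IsPAdicWeightBounded p ω A B Q)
    (h' : IsPAdicWeightBounded p ω A' B Q') : IsPAdicWeightBounded p ω (A + A') B (Q * Q') := by
  classical
  intro d m hd
  rw [coeff_mul]
  refine dvd_sum fun ⟨d₁, d₂⟩ hd₁₂ => ?_
  by_cases hc : coeff d₁ Q = 0
  · simp [hc]
  by_cases hc' : coeff d₂ Q' = 0
  · simp [hc']
  have hw := add_le_add (h.weight_le hc) (h'.weight_le hc')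
  rw [← map_add, HasAntidiagonal.mem_antidiagonal.mp hd₁₂] at hw
  have hm : m + 1 ≤ padicValInt p (coeff d₁ Q) + padicValInt p (coeff d₂ Q') := by
    by_contra hlt
    have : (padicValInt p (coeff d₁ Q) + padicValInt p (coeff d₂ Q')) * B ≤ m * B :=
      Nat.mul_le_mul_right _ (by omega)
    linarith
  refine (pow_dvd_pow _ hm).trans ?_
  rw [pow_add]
  exact mul_dvd_mul (padicValInt_dvd _) (padicValInt_dvd _)

theorem one : IsPAdicWeightBounded p ω 0 B (1 : MvPolynomial σ ℤ) := by
  classical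
  refine of_weight_le fun d hd => ?_
  rw [mem_support_iff, coeff_one] at hd
  simp [(ite_ne_right_iff.mp hd).1.symm]

theorem pow [Fact p.Prime] (h : IsPAdicWeightBounded p ω A B Q) (n : ℕ) :
    IsPAdicWeightBounded p ω (n * A) B (Q ^ n) := by
  induction n with
  | zero => simpa using one
  | succ n ih => simpa [pow_succ, add_mul] using ih.mul h

theorem X_pow (s : σ) (e : ℕ) :
    IsPAdicWeightBounded p ω (e * ω s) B (X s ^ e : MvPolynomial σ ℤ) := by
  classical
  refine of_weight_le fun d hd => ?_
  rw [X_pow_eq_monomial, support_monomial, if_neg one_ne_zero, mem_singleton] at hd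
  rw [hd, Finsupp.weight_single, smul_eq_mul]

end IsPAdicWeightBounded

end PAdicWeight

section WittWeights

variable (p : ℕ)

def wittWeight (b : Fin 2) (s : Fin 2 × ℕ) : ℕ := if s.1 = b then p ^ s.2 else 0

def wittDegree (s : Fin 2 × ℕ) : ℕ := s.2 * p ^ s.2

noncomputable def diagMonomial (i j : ℕ) : Fin 2 × ℕ →₀ ℕ :=
  Finsupp.single (0, i) (p ^ j) + Finsupp.single (1, j) (p ^ i)

theorem rename_wittPolynomial (b : Fin 2) (n : ℕ) :
    rename (Prod.mk b) (wittPolynomial p ℤ n) =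
      ∑ k ∈ range (n + 1), C ((p : ℤ) ^ k) * X (b, k) ^ p ^ (n - k) := by
  simp only [wittPolynomial_eq_sum_C_mul_X_pow, map_sum, map_mul, rename_C, map_pow, rename_X]

theorem isWeightedHomogeneous_rename_wittPolynomial (b c : Fin 2) (n : ℕ) :
    IsWeightedHomogeneous (wittWeight p b) (rename (Prod.mk c) (wittPolynomial p ℤ n))
      (if c = b then p ^ n else 0) := by
  rw [rename_wittPolynomial]
  refine IsWeightedHomogeneous.sum _ _ _ fun k hk => ?_
  have hk : k ≤ n := Nat.lt_succ_iff.mp (mem_range.mp hk)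
  have h := ((isWeightedHomogeneous_X ℤ (wittWeight p b) (c, k)).pow (p ^ (n - k))).C_mul
    ((p : ℤ) ^ k)
  simpa only [wittWeight, smul_eq_mul, mul_ite, mul_zero, pow_sub_mul_pow p hk] using h

theorem isPAdicWeightBounded_rename_wittPolynomial (b : Fin 2) (n : ℕ) :
    IsPAdicWeightBounded p (wittDegree p) 0 (p ^ n)
      (rename (Prod.mk b) (wittPolynomial p ℤ n)) := by
  rw [rename_wittPolynomial]
  refine IsPAdicWeightBounded.sum _ fun k hk => IsPAdicWeightBounded.C_pow_mul ?_
  have hk : k ≤ n := Nat.lt_succ_iff.mp (mem_range.mp hk)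
  refine (IsPAdicWeightBounded.X_pow _ _).mono (le_of_eq ?_) le_rfl
  rw [wittDegree, zero_add, ← mul_assoc, mul_comm _ k, mul_assoc, pow_sub_mul_pow p hk]

theorem eq_single_add_single_of_support_subset {i j : ℕ} {d : Fin 2 × ℕ →₀ ℕ}
    (h : d.support ⊆ {(0, i), (1, j)}) :
    d = Finsupp.single (0, i) (d (0, i)) + Finsupp.single (1, j) (d (1, j)) := by
  conv_lhs => rw [← d.sum_single]
  rw [Finsupp.sum_of_support_subset d h _ fun _ _ => Finsupp.single_zero _, sum_pair (by simp)]

theorem eq_diagMonomial_of_support_subset (hp : 0 < p) {i j : ℕ} {d : Fin 2 × ℕ →₀ ℕ}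
    (hX : Finsupp.weight (wittWeight p 0) d = p ^ (i + j))
    (hY : Finsupp.weight (wittWeight p 1) d = p ^ (i + j))
    (h : d.support ⊆ {(0, i), (1, j)}) : d = diagMonomial p i j := by
  rw [eq_single_add_single_of_support_subset h] at hX hY ⊢
  simp only [map_add, Finsupp.weight_single, wittWeight, smul_eq_mul] at hX hY
  norm_num at hX hY
  have h₀ : d (0, i) = p ^ j :=
    Nat.eq_of_mul_eq_mul_right (pow_pos hp i) (by rw [hX, add_comm, pow_add])
  have h₁ : d (1, j) = p ^ i :=
    Nat.eq_of_mul_eq_mul_right (pow_pos hp j) (hY.trans (pow_add p i j))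
  rw [diagMonomial, h₀, h₁]

theorem eq_diagMonomial (hp : 0 < p) {i j : ℕ} {d : Fin 2 × ℕ →₀ ℕ}
    (hX : Finsupp.weight (wittWeight p 0) d = p ^ (i + j))
    (hY : Finsupp.weight (wittWeight p 1) d = p ^ (i + j))
    (hdeg : Finsupp.weight (wittDegree p) d ≤ (i + j) * p ^ (i + j))
    (hge : ∀ s ∈ d.support, ![i, j] s.1 ≤ s.2) : d = diagMonomial p i j := by
  refine eq_diagMonomial_of_support_subset p hp hX hY fun s hs => ?_
  -- Termwise `![i, j] s.1 * p ^ s.2 ≤ wittDegree p s`; by homogeneity the left side sums to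
  -- `(i + j) * p ^ (i + j)`, which bounds the right sum, so equality holds termwise.
  have hle : ∀ s ∈ d.support, d s * (![i, j] s.1 * p ^ s.2) ≤ d s * wittDegree p s :=
    fun s hs => Nat.mul_le_mul_left _ (Nat.mul_le_mul_right _ (hge s hs))
  have hsplit : ∀ s, d s * (![i, j] s.1 * p ^ s.2) =
      i * (d s * wittWeight p 0 s) + j * (d s * wittWeight p 1 s) := by
    rintro ⟨b, k⟩
    fin_cases b <;> simp [wittWeight] <;> ring
  have heq : ∑ s ∈ d.support, d s * (![i, j] s.1 * p ^ s.2) =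
      ∑ s ∈ d.support, d s * wittDegree p s := by
    refine le_antisymm (sum_le_sum hle) (hdeg.trans (le_of_eq ?_))
    simp only [Finsupp.weight_apply, Finsupp.sum, smul_eq_mul] at hX hY
    rw [sum_congr rfl fun s _ => hsplit s, sum_add_distrib, ← mul_sum, ← mul_sum, hX, hY,
      add_mul]
  have := (sum_eq_sum_iff_of_le hle).mp heq s hs
  rw [wittDegree, Nat.mul_left_cancel_iff (Nat.pos_of_ne_zero (Finsupp.mem_support_iff.mp hs)),
    Nat.mul_right_cancel_iff (pow_pos hp _)] at this
  obtain ⟨b, k⟩ := s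
  fin_cases b <;> simp_all

theorem prod_diagMonomial {R : Type*} [CommRing R] (g : Fin 2 × ℕ → R) (i j : ℕ) :
    ∏ s ∈ (diagMonomial p i j).support, g s ^ diagMonomial p i j s =
      g (0, i) ^ p ^ j * g (1, j) ^ p ^ i := by
  rw [← Finsupp.prod, diagMonomial,
    Finsupp.prod_add_index' (fun _ => pow_zero _) (fun _ => pow_add _)]
  simp only [pow_zero, Finsupp.prod_single_index]

end WittWeights

section WittMul

variable (p : ℕ) [Fact p.Prime]

theorem C_pow_mul_wittMul (n : ℕ) :
    C ((p : ℤ) ^ n) * WittVector.wittMul p n =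
      rename (Prod.mk 0) (wittPolynomial p ℤ n) * rename (Prod.mk 1) (wittPolynomial p ℤ n) -
        ∑ i ∈ range n, C ((p : ℤ) ^ i) * WittVector.wittMul p i ^ p ^ (n - i) := by
  have h := wittStructureInt_prop p (X 0 * X 1 : MvPolynomial (Fin 2) ℤ) n
  rw [map_mul, bind₁_X_right, bind₁_X_right] at h
  rw [← h, eq_sub_iff_add_eq, wittPolynomial_eq_sum_C_mul_X_pow, sum_range_succ, add_comm]
  simp only [map_add, map_sum, map_mul, bind₁_C_right, map_pow, bind₁_X_right, Nat.sub_self,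
    pow_zero, pow_one]
  rfl

theorem isWeightedHomogeneous_wittMul (b : Fin 2) (n : ℕ) :
    IsWeightedHomogeneous (wittWeight p b) (WittVector.wittMul p n) (p ^ n) := by
  induction n using Nat.strong_induction_on with
  | _ n ih =>
  have h : IsWeightedHomogeneous (wittWeight p b)
      (C ((p : ℤ) ^ n) * WittVector.wittMul p n) (p ^ n) := by
    rw [C_pow_mul_wittMul]
    refine IsWeightedHomogeneous.sub ?_ (IsWeightedHomogeneous.sum _ _ _ fun i hi => ?_)
    · convert (isWeightedHomogeneous_rename_wittPolynomial p b 0 n).mul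
        (isWeightedHomogeneous_rename_wittPolynomial p b 1 n) using 1
      fin_cases b <;> simp
    · have hi : i < n := mem_range.mp hi
      have h := ((ih i hi).pow (p ^ (n - i))).C_mul ((p : ℤ) ^ i)
      rwa [smul_eq_mul, pow_sub_mul_pow p hi.le] at h
  refine fun d hd => h ?_
  rwa [coeff_C_mul, mul_ne_zero_iff_left (pow_ne_zero _ (Int.natCast_ne_zero.mpr
    (Fact.out : p.Prime).ne_zero))]

theorem isPAdicWeightBounded_wittMul (n : ℕ) :
    IsPAdicWeightBounded p (wittDegree p) (n * p ^ n) (p ^ n) (WittVector.wittMul p n) := by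
  induction n using Nat.strong_induction_on with
  | _ n ih =>
  have h : IsPAdicWeightBounded p (wittDegree p) 0 (p ^ n)
      (C ((p : ℤ) ^ n) * WittVector.wittMul p n) := by
    rw [C_pow_mul_wittMul]
    refine IsPAdicWeightBounded.sub ?_ (IsPAdicWeightBounded.sum _ fun i hi => ?_)
    · simpa using (isPAdicWeightBounded_rename_wittPolynomial p 0 n).mul
        (isPAdicWeightBounded_rename_wittPolynomial p 1 n)
    · have hi : i < n := mem_range.mp hi
      refine IsPAdicWeightBounded.C_pow_mul (((ih i hi).pow _).mono (le_of_eq ?_)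
        (Nat.pow_le_pow_right (Fact.out : p.Prime).pos hi.le))
      rw [zero_add, ← mul_assoc, mul_comm _ i, mul_assoc, pow_sub_mul_pow p hi.le]
  simpa using h.of_C_pow_mul (Fact.out : p.Prime).ne_zero

theorem wittDegree_le_of_not_dvd {n : ℕ} {d : Fin 2 × ℕ →₀ ℕ}
    (hd : ¬ (p : ℤ) ∣ coeff d (WittVector.wittMul p n)) :
    Finsupp.weight (wittDegree p) d ≤ n * p ^ n := by
  by_contra h
  exact hd (by simpa using isPAdicWeightBounded_wittMul p n d 0 (by simpa using h))

theorem coeff_iterate_verschiebung_teichmuller {R : Type*} [CommRing R] (r : R) (i k : ℕ) :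
    ((WittVector.verschiebung)^[i] (WittVector.teichmuller p r)).coeff k =
      if k = i then r else 0 := by
  rcases lt_or_ge k i with h | h
  · rw [if_neg h.ne, WittVector.iterate_verschiebung_coeff_eq_zero _ h]
  · obtain ⟨m, rfl⟩ := Nat.exists_eq_add_of_le' h
    rw [WittVector.iterate_verschiebung_coeff]
    rcases Nat.eq_zero_or_pos m with rfl | hm
    · simp [WittVector.teichmuller_coeff_zero]
    · rw [WittVector.teichmuller_coeff_pos p r m hm, if_neg (by omega)]

noncomputable def wittMulTerm {R : Type*} [CommRing R] (x y : WittVector p R) (n : ℕ)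
    (d : Fin 2 × ℕ →₀ ℕ) : R :=
  ((coeff d (WittVector.wittMul p n) : ℤ) : R) *
    ∏ s ∈ d.support, Function.uncurry ![x.coeff, y.coeff] s ^ d s

theorem mul_coeff_eq_sum_wittMulTerm {R : Type*} [CommRing R] (x y : WittVector p R) (n : ℕ) :
    (x * y).coeff n = ∑ d ∈ (WittVector.wittMul p n).support, wittMulTerm p x y n d := by
  rw [WittVector.mul_coeff, WittVector.peval, aeval_def, algebraMap_int_eq, eval₂_eq]
  rfl

theorem coeff_diagMonomial_wittMul (i j : ℕ) :
    coeff (diagMonomial p i j) (WittVector.wittMul p (i + j)) ≡ 1 [ZMOD p] := by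
  set R := MvPolynomial (Fin 2) (ZMod p)
  set x := (WittVector.verschiebung)^[i] (WittVector.teichmuller p (X 0 : R))
  set y := (WittVector.verschiebung)^[j] (WittVector.teichmuller p (X 1 : R))
  have hx : ∀ k, x.coeff k = if k = i then X 0 else 0 :=
    coeff_iterate_verschiebung_teichmuller p _ i
  have hy : ∀ k, y.coeff k = if k = j then X 1 else 0 :=
    coeff_iterate_verschiebung_teichmuller p _ j
  -- every other monomial of `wittMul p (i + j)` involves a coordinate of `x` or `y` that vanishes
  have hterm : ∀ d ∈ (WittVector.wittMul p (i + j)).support, d ≠ diagMonomial p i j →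
      wittMulTerm p x y (i + j) d = 0 := by
    intro d hd hne
    have hd := mem_support_iff.mp hd
    obtain ⟨⟨b, k⟩, hs, hout⟩ := not_subset.mp fun h =>
      hne (eq_diagMonomial_of_support_subset p (Fact.out : p.Prime).pos
        (isWeightedHomogeneous_wittMul p 0 _ hd) (isWeightedHomogeneous_wittMul p 1 _ hd) h)
    refine mul_eq_zero_of_right _ (prod_eq_zero hs ?_)
    fin_cases b <;> simp_all
  have key := WittVector.iterate_verschiebung_mul_coeff (WittVector.teichmuller p (X 0 : R))
    (WittVector.teichmuller p (X 1 : R)) i j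
  rw [mul_coeff_eq_sum_wittMulTerm, sum_eq_single _ hterm
      (fun h => by simp [wittMulTerm, notMem_support_iff.mp h]),
    WittVector.teichmuller_coeff_zero, WittVector.teichmuller_coeff_zero, wittMulTerm,
    prod_diagMonomial] at key
  simp only [Function.uncurry_apply_pair, Matrix.cons_val_zero, Matrix.cons_val_one, hx, hy,
    if_pos] at key
  have hM : (X 0 : R) ^ p ^ j * X 1 ^ p ^ i ≠ 0 :=
    mul_ne_zero (pow_ne_zero _ (X_ne_zero _)) (pow_ne_zero _ (X_ne_zero _))
  have := mul_right_cancel₀ hM (key.trans (one_mul _).symm)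
  exact (CharP.intCast_eq_intCast R p).mp (by simpa using this)

theorem diagMonomial_mem_support_wittMul (i j : ℕ) :
    diagMonomial p i j ∈ (WittVector.wittMul p (i + j)).support := by
  refine mem_support_iff.mpr fun h₀ => (Fact.out : p.Prime).one_lt.ne' ?_
  have := (coeff_diagMonomial_wittMul p i j).symm.dvd
  rwa [h₀, zero_sub, Int.dvd_neg, Int.natCast_dvd_ofNat, Nat.dvd_one] at this

end WittMul

section WithTopSums

variable {ι : Type*} (s : Finset ι) (n : ι → ℕ) {ρ : ι → ℝ} {u : ι → WithTop ℝ}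

theorem coe_sum_le_sum_nsmul (h : ∀ i ∈ s, (ρ i : WithTop ℝ) ≤ u i) :
    ((∑ i ∈ s, n i * ρ i : ℝ) : WithTop ℝ) ≤ ∑ i ∈ s, n i • u i := by
  rw [WithTop.coe_sum]
  refine sum_le_sum fun i hi => ?_
  rw [← nsmul_eq_mul, WithTop.coe_nsmul]
  exact nsmul_le_nsmul_right (h i hi) _

theorem coe_sum_lt_sum_nsmul (h : ∀ i ∈ s, (ρ i : WithTop ℝ) ≤ u i) {j : ι} (hj : j ∈ s)
    (hnj : n j ≠ 0) (hlt : (ρ j : WithTop ℝ) < u j) :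
    ((∑ i ∈ s, n i * ρ i : ℝ) : WithTop ℝ) < ∑ i ∈ s, n i • u i := by
  classical
  rw [← add_sum_erase _ _ hj, ← add_sum_erase _ _ hj, WithTop.coe_add]
  refine WithTop.add_lt_add_of_lt_of_le WithTop.coe_ne_top ?_
    (coe_sum_le_sum_nsmul _ n fun i hi => h i (mem_of_mem_erase hi))
  obtain ⟨t, hρt, htu⟩ := WithTop.lt_iff_exists_coe_btwn.mp hlt
  calc ((n j * ρ j : ℝ) : WithTop ℝ) < (n j • t : ℝ) := by
        rw [← nsmul_eq_mul, WithTop.coe_lt_coe]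
        exact nsmul_lt_nsmul_right hnj (WithTop.coe_lt_coe.mp hρt)
    _ ≤ n j • u j := by
        rw [WithTop.coe_nsmul]
        exact nsmul_le_nsmul_right htu.le _

end WithTopSums

section Valuation

variable {R Γ : Type*} [CommRing R] [LinearOrderedAddCommMonoidWithTop Γ] (w : AddValuation R Γ)

theorem map_prod_pow {σ : Type*} (s : Finset σ) (g : σ → R) (n : σ → ℕ) :
    w (∏ i ∈ s, g i ^ n i) = ∑ i ∈ s, n i • w (g i) := by
  classical
  induction s using Finset.induction_on with
  | empty => simp [AddValuation.map_one]
  | insert a s ha ih => rw [prod_insert ha, sum_insert ha, w.map_mul, w.map_pow, ih]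

theorem map_intCast_nonneg (c : ℤ) : 0 ≤ w (c : R) := by
  have hnat : ∀ n : ℕ, 0 ≤ w (n : R) := fun n => by
    induction n with
    | zero => simp [AddValuation.map_zero]
    | succ n ih =>
      rw [Nat.cast_succ]
      exact w.map_le_add ih w.map_one.ge
  obtain ⟨n, rfl | rfl⟩ := Int.eq_nat_or_neg c
  · rw [Int.cast_natCast]
    exact hnat n
  · rw [Int.cast_neg, Int.cast_natCast, w.map_neg]
    exact hnat n

theorem sum_nsmul_le_map_intCast_mul_prod {σ : Type*} (c : ℤ) (s : Finset σ) (g : σ → R)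
    (n : σ → ℕ) : ∑ i ∈ s, n i • w (g i) ≤ w ((c : R) * ∏ i ∈ s, g i ^ n i) := by
  rw [w.map_mul, map_prod_pow]
  exact le_add_of_nonneg_left (map_intCast_nonneg w c)

end Valuation

section CoeffBounds

variable (p : ℕ)

def gaussBound (r : ℝ) (a : Fin 2 → ℝ) (s : Fin 2 × ℕ) : ℝ :=
  (a s.1 - s.2 * r) * (p : ℝ) ^ s.2

theorem le_sum_mul_gaussBound {r : ℝ} (hr : 0 ≤ r) (a : Fin 2 → ℝ) {N : ℕ}
    {d : Fin 2 × ℕ →₀ ℕ} (hX : Finsupp.weight (wittWeight p 0) d = p ^ N)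
    (hY : Finsupp.weight (wittWeight p 1) d = p ^ N)
    (hdeg : Finsupp.weight (wittDegree p) d ≤ N * p ^ N) :
    (a 0 + a 1 - N * r) * (p : ℝ) ^ N ≤ ∑ s ∈ d.support, d s * gaussBound p r a s := by
  have hsplit : ∀ s, (d s : ℝ) * gaussBound p r a s =
      a 0 * ((d s * wittWeight p 0 s : ℕ) : ℝ) + a 1 * ((d s * wittWeight p 1 s : ℕ) : ℝ) -
        r * ((d s * wittDegree p s : ℕ) : ℝ) := by
    rintro ⟨b, k⟩
    fin_cases b <;> simp [gaussBound, wittWeight, wittDegree] <;> ring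
  simp only [Finsupp.weight_apply, Finsupp.sum, smul_eq_mul] at hX hY hdeg
  rw [sum_congr rfl fun s _ => hsplit s, sum_sub_distrib, sum_add_distrib, ← mul_sum, ← mul_sum,
    ← mul_sum, ← Nat.cast_sum, ← Nat.cast_sum, ← Nat.cast_sum, hX, hY]
  have : ((∑ s ∈ d.support, d s * wittDegree p s : ℕ) : ℝ) ≤ N * (p : ℝ) ^ N := by
    exact_mod_cast hdeg
  push_cast at this ⊢
  nlinarith [mul_le_mul_of_nonneg_left this hr]

variable [Fact p.Prime] {R : Type*} [CommRing R] [CharP R p] (w : AddValuation R (WithTop ℝ))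
  {r : ℝ} {a : Fin 2 → ℝ} {x y : WittVector p R}

theorem wittMulTerm_eq_zero {N : ℕ} {d : Fin 2 × ℕ →₀ ℕ}
    (hd : (p : ℤ) ∣ coeff d (WittVector.wittMul p N)) : wittMulTerm p x y N d = 0 := by
  rw [wittMulTerm, (CharP.intCast_eq_zero_iff R p _).mpr hd, zero_mul]

theorem le_map_mul_coeff (hr : 0 ≤ r)
    (h : ∀ s, (gaussBound p r a s : WithTop ℝ) ≤ w (Function.uncurry ![x.coeff, y.coeff] s))
    (N : ℕ) :
    (((a 0 + a 1 - N * r) * (p : ℝ) ^ N : ℝ) : WithTop ℝ) ≤ w ((x * y).coeff N) := by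
  rw [mul_coeff_eq_sum_wittMulTerm]
  refine w.map_le_sum fun d hd => ?_
  by_cases hdvd : (p : ℤ) ∣ coeff d (WittVector.wittMul p N)
  · rw [wittMulTerm_eq_zero p hdvd, w.map_zero]
    exact le_top
  have hc := mem_support_iff.mp hd
  calc _ ≤ ((∑ s ∈ d.support, d s * gaussBound p r a s : ℝ) : WithTop ℝ) :=
        WithTop.coe_le_coe.mpr (le_sum_mul_gaussBound p hr a
          (isWeightedHomogeneous_wittMul p 0 N hc) (isWeightedHomogeneous_wittMul p 1 N hc)
          (wittDegree_le_of_not_dvd p hdvd))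
    _ ≤ _ := coe_sum_le_sum_nsmul _ _ fun s _ => h s
    _ ≤ _ := sum_nsmul_le_map_intCast_mul_prod w _ _ _ _

theorem map_wittMulTerm_diagMonomial {i j : ℕ} (hi : w (x.coeff i) = gaussBound p r a (0, i))
    (hj : w (y.coeff j) = gaussBound p r a (1, j)) :
    w (wittMulTerm p x y (i + j) (diagMonomial p i j)) =
      (((a 0 + a 1 - (i + j : ℕ) * r) * (p : ℝ) ^ (i + j) : ℝ) : WithTop ℝ) := by
  rw [wittMulTerm, (CharP.intCast_eq_intCast R p).mpr (coeff_diagMonomial_wittMul p i j),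
    Int.cast_one, one_mul, prod_diagMonomial, w.map_mul, w.map_pow, w.map_pow]
  simp only [Function.uncurry_apply_pair, Matrix.cons_val_zero, Matrix.cons_val_one, hi, hj,
    gaussBound]
  rw [← WithTop.coe_nsmul, ← WithTop.coe_nsmul, ← WithTop.coe_add, WithTop.coe_inj]
  simp only [nsmul_eq_mul]
  push_cast
  ring

theorem map_mul_coeff_eq (hr : 0 ≤ r)
    (h : ∀ s, (gaussBound p r a s : WithTop ℝ) ≤ w (Function.uncurry ![x.coeff, y.coeff] s))
    {i j : ℕ} (hlt : ∀ s, s.2 < ![i, j] s.1 →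
      (gaussBound p r a s : WithTop ℝ) < w (Function.uncurry ![x.coeff, y.coeff] s))
    (hi : w (x.coeff i) = gaussBound p r a (0, i)) (hj : w (y.coeff j) = gaussBound p r a (1, j)) :
    w ((x * y).coeff (i + j)) =
      (((a 0 + a 1 - (i + j : ℕ) * r) * (p : ℝ) ^ (i + j) : ℝ) : WithTop ℝ) := by
  have hrest : (((a 0 + a 1 - (i + j : ℕ) * r) * (p : ℝ) ^ (i + j) : ℝ) : WithTop ℝ) <
      w (∑ d ∈ (WittVector.wittMul p (i + j)).support.erase (diagMonomial p i j),
        wittMulTerm p x y (i + j) d) := by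
    refine w.map_lt_sum WithTop.coe_ne_top fun d hd => ?_
    obtain ⟨hne, hd⟩ := mem_erase.mp hd
    by_cases hdvd : (p : ℤ) ∣ coeff d (WittVector.wittMul p (i + j))
    · rw [wittMulTerm_eq_zero p hdvd, w.map_zero]
      exact WithTop.coe_lt_top _
    have hc := mem_support_iff.mp hd
    have hX := isWeightedHomogeneous_wittMul p 0 _ hc
    have hY := isWeightedHomogeneous_wittMul p 1 _ hc
    have hdeg := wittDegree_le_of_not_dvd p hdvd
    obtain ⟨s, hs, hsij⟩ : ∃ s ∈ d.support, s.2 < ![i, j] s.1 := by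
      by_contra! hge
      exact hne (eq_diagMonomial p (Fact.out : p.Prime).pos hX hY hdeg hge)
    calc _ ≤ ((∑ s ∈ d.support, d s * gaussBound p r a s : ℝ) : WithTop ℝ) :=
          WithTop.coe_le_coe.mpr (le_sum_mul_gaussBound p hr a hX hY hdeg)
      _ < _ := coe_sum_lt_sum_nsmul _ _ (fun s _ => h s) hs (Finsupp.mem_support_iff.mp hs)
          (hlt s hsij)
      _ ≤ _ := sum_nsmul_le_map_intCast_mul_prod w _ _ _ _
  rw [← map_wittMulTerm_diagMonomial p w hi hj] at hrest ⊢
  rw [mul_coeff_eq_sum_wittMulTerm, ← add_sum_erase _ _ (diagMonomial_mem_support_wittMul p i j),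
    w.map_add_eq_of_lt_left hrest]

end CoeffBounds

section EReal

abbrev toEReal (u : WithTop ℝ) : EReal := WithBot.some u

theorem coe_le_mul_inv_add_iff {u : WithTop ℝ} {q : ℝ} (hq : 0 < q) (t c : ℝ) :
    (t : EReal) ≤ toEReal u * ((q⁻¹ : ℝ) : EReal) + (c : EReal) ↔
      (((t - c) * q : ℝ) : WithTop ℝ) ≤ u := by
  induction u using WithTop.recTopCoe with
  | top =>
    change (t : EReal) ≤ ⊤ * ((q⁻¹ : ℝ) : EReal) + (c : EReal) ↔ _
    rw [EReal.top_mul_of_pos (EReal.coe_pos.mpr (inv_pos.mpr hq)), EReal.top_add_coe]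
    exact iff_of_true le_top le_top
  | coe s =>
    change (t : EReal) ≤ (s : EReal) * ((q⁻¹ : ℝ) : EReal) + (c : EReal) ↔ _
    rw [← EReal.coe_mul, ← EReal.coe_add, EReal.coe_le_coe_iff, WithTop.coe_le_coe,
      ← sub_le_iff_le_add, le_mul_inv_iff₀ hq]

theorem coe_lt_mul_inv_add_iff {u : WithTop ℝ} {q : ℝ} (hq : 0 < q) (t c : ℝ) :
    (t : EReal) < toEReal u * ((q⁻¹ : ℝ) : EReal) + (c : EReal) ↔
      (((t - c) * q : ℝ) : WithTop ℝ) < u := by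
  induction u using WithTop.recTopCoe with
  | top =>
    change (t : EReal) < ⊤ * ((q⁻¹ : ℝ) : EReal) + (c : EReal) ↔ _
    rw [EReal.top_mul_of_pos (EReal.coe_pos.mpr (inv_pos.mpr hq)), EReal.top_add_coe]
    exact iff_of_true (EReal.coe_lt_top _) (WithTop.coe_lt_top _)
  | coe s =>
    change (t : EReal) < (s : EReal) * ((q⁻¹ : ℝ) : EReal) + (c : EReal) ↔ _
    rw [← EReal.coe_mul, ← EReal.coe_add, EReal.coe_lt_coe_iff, WithTop.coe_lt_coe,
      ← sub_lt_iff_lt_add, lt_mul_inv_iff₀ hq]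

theorem mul_inv_add_eq_coe_iff {u : WithTop ℝ} {q : ℝ} (hq : 0 < q) (t c : ℝ) :
    toEReal u * ((q⁻¹ : ℝ) : EReal) + (c : EReal) = t ↔
      u = (((t - c) * q : ℝ) : WithTop ℝ) := by
  rw [le_antisymm_iff, le_antisymm_iff, coe_le_mul_inv_add_iff hq, ← not_lt,
    coe_lt_mul_inv_add_iff hq, not_lt, and_comm]

theorem exists_eq_iInf_of_le_add_mul {τ : ℕ → EReal} {C r : ℝ} (hr : 0 < r)
    (hτ : ∀ n : ℕ, ((C + n * r : ℝ) : EReal) ≤ τ n) (htop : ⨅ n, τ n ≠ ⊤) :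
    ∃ n, τ n = ⨅ n, τ n := by
  obtain ⟨u, hu, -⟩ := EReal.lt_iff_exists_real_btwn.mp htop.lt_top
  obtain ⟨n₀, hn₀⟩ := exists_nat_gt ((u - C) / r)
  have hbig : ∀ n, n₀ < n → (u : EReal) < τ n := fun n hn => by
    refine lt_of_lt_of_le (EReal.coe_lt_coe_iff.mpr ?_) (hτ n)
    have : (n₀ : ℝ) < n := by exact_mod_cast hn
    nlinarith [(div_lt_iff₀ hr).mp hn₀]
  obtain ⟨k, hk⟩ := iInf_lt_iff.mp hu
  have hk₀ : k ≤ n₀ := by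
    by_contra! h
    exact (hbig k h).not_gt hk
  obtain ⟨m, -, hm⟩ := (range (n₀ + 1)).exists_min_image τ nonempty_range_add_one
  refine ⟨m, le_antisymm (le_iInf fun n => ?_) (iInf_le _ _)⟩
  rcases le_or_gt n n₀ with hn | hn
  · exact hm n (mem_range_succ_iff.mpr hn)
  · exact ((hm k (mem_range_succ_iff.mpr hk₀)).trans_lt (hk.trans (hbig n hn))).le

theorem eq_add_of_forall_coe_le {z A B : EReal} (hA : A ≠ ⊥) (hB : B ≠ ⊥)
    (hle : ∀ a b : ℝ, (a : EReal) ≤ A → (b : EReal) ≤ B → ((a + b : ℝ) : EReal) ≤ z)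
    (hge : ∀ a b : ℝ, A = a → B = b → z ≤ ((a + b : ℝ) : EReal)) : z = A + B := by
  refine le_antisymm ?_ (EReal.add_le_of_forall_lt fun a' ha' b' hb' => ?_)
  · induction A using EReal.rec with
    | bot => exact absurd rfl hA
    | top =>
      rw [EReal.top_add_of_ne_bot hB]
      exact le_top
    | coe a =>
      induction B using EReal.rec with
      | bot => exact absurd rfl hB
      | top =>
        rw [EReal.add_top_of_ne_bot hA]
        exact le_top
      | coe b => exact (hge a b rfl rfl).trans_eq (EReal.coe_add a b)
  · induction a' using EReal.rec with
    | bot =>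
      rw [EReal.bot_add]
      exact bot_le
    | top => exact absurd ha' not_top_lt
    | coe a =>
      induction b' using EReal.rec with
      | bot =>
        rw [EReal.add_bot]
        exact bot_le
      | top => exact absurd hb' not_top_lt
      | coe b => exact (EReal.coe_add a b).symm.trans_le (hle a b ha'.le hb'.le)

end EReal

section GaussVal

variable {p : ℕ} {R : Type*} [CommRing R] (w : AddValuation R (WithTop ℝ)) (r : ℝ)

/-- The term `v ([x_n ^ p^(-n)]) + n r` of the Gauss valuation `v_r (∑ [x_n ^ p^(-n)] p^n)`. -/
noncomputable def gaussTerm (x : WittVector p R) (n : ℕ) : EReal :=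
  toEReal (w (x.coeff n)) * ((((p : ℝ) ^ n)⁻¹ : ℝ) : EReal) + (((n : ℝ) * r : ℝ) : EReal)

noncomputable def gaussVal (x : WittVector p R) : EReal := ⨅ n : ℕ, gaussTerm w r x n

def IsGaussBounded (x : WittVector p R) : Prop :=
  ∃ C : ℝ, ∀ n : ℕ,
    (C : EReal) ≤ toEReal (w (x.coeff n)) * ((((p : ℝ) ^ n)⁻¹ : ℝ) : EReal)

variable {w r} {x y : WittVector p R}

theorem IsGaussBounded.add_mul_le_gaussTerm (hx : IsGaussBounded w x) :
    ∃ C : ℝ, ∀ n : ℕ, ((C + n * r : ℝ) : EReal) ≤ gaussTerm w r x n := by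
  obtain ⟨C, hC⟩ := hx
  exact ⟨C, fun n => (EReal.coe_add _ _).trans_le (add_le_add (hC n) le_rfl)⟩

theorem IsGaussBounded.gaussVal_ne_bot (hr : 0 ≤ r) (hx : IsGaussBounded w x) :
    gaussVal w r x ≠ ⊥ := by
  obtain ⟨C, hC⟩ := hx.add_mul_le_gaussTerm (r := r)
  refine ne_bot_of_le_ne_bot (EReal.coe_ne_bot C) (le_iInf fun n => le_trans ?_ (hC n))
  exact EReal.coe_le_coe_iff.mpr (le_add_of_nonneg_right (by positivity))

variable [Fact p.Prime]

theorem cast_pow_pos (n : ℕ) : (0 : ℝ) < (p : ℝ) ^ n :=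
  pow_pos (Nat.cast_pos.mpr (Fact.out : p.Prime).pos) n

theorem coe_le_gaussVal_iff (t : ℝ) : (t : EReal) ≤ gaussVal w r x ↔
    ∀ k : ℕ, (((t - k * r) * (p : ℝ) ^ k : ℝ) : WithTop ℝ) ≤ w (x.coeff k) := by
  simp only [gaussVal, gaussTerm, le_iInf_iff]
  exact forall_congr' fun k => coe_le_mul_inv_add_iff (cast_pow_pos k) _ _

theorem exists_first_gaussTerm_eq (hr : 0 < r) (hx : IsGaussBounded w x) {a : ℝ}
    (ha : gaussVal w r x = a) :
    ∃ i, w (x.coeff i) = (((a - i * r) * (p : ℝ) ^ i : ℝ) : WithTop ℝ) ∧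
      ∀ k < i, (((a - k * r) * (p : ℝ) ^ k : ℝ) : WithTop ℝ) < w (x.coeff k) := by
  obtain ⟨C, hC⟩ := hx.add_mul_le_gaussTerm (r := r)
  have hex : ∃ n, gaussTerm w r x n = a := by
    have htop : gaussVal w r x ≠ ⊤ := ha ▸ EReal.coe_ne_top a
    rw [← ha]
    exact exists_eq_iInf_of_le_add_mul hr hC htop
  refine ⟨Nat.find hex, (mul_inv_add_eq_coe_iff (cast_pow_pos _) _ _).mp (Nat.find_spec hex),
    fun k hk => (coe_lt_mul_inv_add_iff (cast_pow_pos _) _ _).mp ?_⟩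
  exact lt_of_le_of_ne (ha ▸ iInf_le _ k) (Ne.symm (Nat.find_min hex hk))

variable [CharP R p]

theorem coe_add_le_gaussVal_mul (hr : 0 ≤ r) {a b : ℝ} (ha : (a : EReal) ≤ gaussVal w r x)
    (hb : (b : EReal) ≤ gaussVal w r y) : ((a + b : ℝ) : EReal) ≤ gaussVal w r (x * y) := by
  rw [coe_le_gaussVal_iff] at ha hb ⊢
  intro N
  have h : ∀ s, (gaussBound p r ![a, b] s : WithTop ℝ) ≤
      w (Function.uncurry ![x.coeff, y.coeff] s) := by
    rintro ⟨c, k⟩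
    fin_cases c
    exacts [ha k, hb k]
  simpa using le_map_mul_coeff p w hr h N

theorem gaussVal_mul_le (hr : 0 < r) (hx : IsGaussBounded w x) (hy : IsGaussBounded w y)
    {a b : ℝ} (ha : gaussVal w r x = a) (hb : gaussVal w r y = b) :
    gaussVal w r (x * y) ≤ ((a + b : ℝ) : EReal) := by
  obtain ⟨i, hi, hix⟩ := exists_first_gaussTerm_eq hr hx ha
  obtain ⟨j, hj, hjy⟩ := exists_first_gaussTerm_eq hr hy hb
  have hxa := (coe_le_gaussVal_iff a).mp ha.ge
  have hyb := (coe_le_gaussVal_iff b).mp hb.ge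
  have h : ∀ s, (gaussBound p r ![a, b] s : WithTop ℝ) ≤
      w (Function.uncurry ![x.coeff, y.coeff] s) := by
    rintro ⟨c, k⟩
    fin_cases c
    exacts [hxa k, hyb k]
  have hlt : ∀ s : Fin 2 × ℕ, s.2 < ![i, j] s.1 →
      (gaussBound p r ![a, b] s : WithTop ℝ) < w (Function.uncurry ![x.coeff, y.coeff] s) := by
    rintro ⟨c, k⟩ hk
    fin_cases c
    exacts [hix k hk, hjy k hk]
  have hij := map_mul_coeff_eq p w hr.le h hlt hi hj
  refine (iInf_le _ (i + j)).trans_eq ((mul_inv_add_eq_coe_iff (cast_pow_pos _) _ _).mpr ?_)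
  simpa using hij

theorem gaussVal_mul (hr : 0 < r) (hx : IsGaussBounded w x) (hy : IsGaussBounded w y) :
    gaussVal w r (x * y) = gaussVal w r x + gaussVal w r y :=
  eq_add_of_forall_coe_le (hx.gaussVal_ne_bot hr.le) (hy.gaussVal_ne_bot hr.le)
    (fun _ _ ha hb => coe_add_le_gaussVal_mul hr.le ha hb)
    (fun _ _ ha hb => gaussVal_mul_le hr hx hy ha hb)

end GaussVal

theorem exists_addValuation_eq {F : Type*} [Ring F] {v : F → EReal} (hv_zero : v 0 = ⊤)
    (hv_ne_bot : ∀ a, v a ≠ ⊥) (hv_mul : ∀ a b, v (a * b) = v a + v b)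
    (hv_add : ∀ a b, min (v a) (v b) ≤ v (a + b)) (hv_ne_top : ∃ a, v a ≠ ⊤) :
    ∃ w : AddValuation F (WithTop ℝ), ∀ a, v a = toEReal (w a) := by
  set w : F → WithTop ℝ := fun a => (v a).unbot (hv_ne_bot a)
  have hw : ∀ a, v a = toEReal (w a) := fun a => (WithBot.coe_unbot _ _).symm
  have hmul : ∀ a b, w (a * b) = w a + w b := fun a b =>
    WithBot.coe_injective ((hw _).symm.trans ((hv_mul a b).trans (by rw [hw, hw]; rfl)))
  obtain ⟨a, ha⟩ := hv_ne_top
  have hone : w 1 = 0 := by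
    refine WithTop.add_left_cancel (x := w a) (fun h => ha ?_) ?_
    · rw [hw, h]
      rfl
    · rw [← hmul, mul_one, add_zero]
  refine ⟨AddValuation.of w (WithBot.coe_injective ((hw 0).symm.trans hv_zero)) hone
    (fun a b => ?_) hmul, hw⟩
  have := hv_add a b
  rw [hw, hw, hw] at this
  exact WithBot.coe_le_coe.mp ((WithBot.coe_min _ _).trans_le this)

end GaussValuation

open GaussValuation in
theorem gauss_valuation_multiplicative_general
    (p : ℕ) [hp : Fact p.Prime]
    (F : Type*) [Field F] [CharP F p]
    (v : F → EReal)
    (hv_zero : v 0 = ⊤)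
    (hv_ne_bot : ∀ a : F, v a ≠ ⊥)
    (hv_mul : ∀ a b : F, v (a * b) = v a + v b)
    (hv_add : ∀ a b : F, min (v a) (v b) ≤ v (a + b))
    (hv_nontrivial : ∃ a : F, a ≠ 0 ∧ v a ≠ 0 ∧ v a ≠ ⊤)
    (r : ℝ) (hr : 0 < r)
    (x y : WittVector p F)
    (hx : ∃ C : ℝ, ∀ n : ℕ, (C : EReal) ≤ v (x.coeff n) * (((((p : ℝ) ^ n)⁻¹ : ℝ) : EReal)))
    (hy : ∃ C : ℝ, ∀ n : ℕ, (C : EReal) ≤ v (y.coeff n) * (((((p : ℝ) ^ n)⁻¹ : ℝ) : EReal))) :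
    (⨅ n : ℕ, v ((x * y).coeff n) * (((((p : ℝ) ^ n)⁻¹ : ℝ) : EReal))
        + (((n : ℝ) * r : ℝ) : EReal))
      = (⨅ n : ℕ, v (x.coeff n) * (((((p : ℝ) ^ n)⁻¹ : ℝ) : EReal))
          + (((n : ℝ) * r : ℝ) : EReal))
        + (⨅ n : ℕ, v (y.coeff n) * (((((p : ℝ) ^ n)⁻¹ : ℝ) : EReal))
            + (((n : ℝ) * r : ℝ) : EReal)) := by
  obtain ⟨a, -, -, ha⟩ := hv_nontrivial
  obtain ⟨w, hw⟩ := exists_addValuation_eq hv_zero hv_ne_bot hv_mul hv_add ⟨a, ha⟩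
  obtain rfl : v = fun a => toEReal (w a) := funext hw
  exact gaussVal_mul hr hx hy

/-- The Gauss valuation `v_r` on bounded elements of the ring of Witt
vectors of a perfect field `F` of characteristic `p` with a nontrivial (additive)
valuation `v` is multiplicative: `v_r (x * y) = v_r x + v_r y`.

Here `x = Σ [x_n] p^n` with `x_n = (x.coeff n) ^ (p ^ (-n))`, so
`v (x_n) = v (x.coeff n) * (p ^ n)⁻¹`, and
`v_r x = ⨅ n, v (x_n) + n * r`. -/
theorem gauss_valuation_multiplicative
    (p : ℕ) [hp : Fact p.Prime]
    (F : Type*) [Field F] [CharP F p] [PerfectRing F p]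
    (v : F → EReal)
    (hv_zero : v 0 = ⊤)
    (hv_ne_bot : ∀ a : F, v a ≠ ⊥)
    (hv_mul : ∀ a b : F, v (a * b) = v a + v b)
    (hv_add : ∀ a b : F, min (v a) (v b) ≤ v (a + b))
    (hv_nontrivial : ∃ a : F, a ≠ 0 ∧ v a ≠ 0 ∧ v a ≠ ⊤)
    (r : ℝ) (hr : 0 < r)
    (x y : WittVector p F)
    (hx : ∃ C : ℝ, ∀ n : ℕ, (C : EReal) ≤ v (x.coeff n) * (((((p : ℝ) ^ n)⁻¹ : ℝ) : EReal)))
    (hy : ∃ C : ℝ, ∀ n : ℕ, (C : EReal) ≤ v (y.coeff n) * (((((p : ℝ) ^ n)⁻¹ : ℝ) : EReal))) :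
    (⨅ n : ℕ, v ((x * y).coeff n) * (((((p : ℝ) ^ n)⁻¹ : ℝ) : EReal))
        + (((n : ℝ) * r : ℝ) : EReal))
      = (⨅ n : ℕ, v (x.coeff n) * (((((p : ℝ) ^ n)⁻¹ : ℝ) : EReal))
          + (((n : ℝ) * r : ℝ) : EReal))
        + (⨅ n : ℕ, v (y.coeff n) * (((((p : ℝ) ^ n)⁻¹ : ℝ) : EReal))
            + (((n : ℝ) * r : ℝ) : EReal)) :=
  gauss_valuation_multiplicative_general p (hp := hp) F v hv_zero hv_ne_bot hv_mul hv_add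
    hv_nontrivial r hr x y hx hy
end

section
/- Let G be a group, Z a central subgroup, K ≤ G a subgroup, and K_Z := K ∩ Z. Let X be a set with a right action of G (hence of K and of Z) and Y a set with a free action of Z. Then the canonical map (X ×_Z Y)/K → (X/K) ×_{Z/K_Z} (Y/K_Z) is a bijection, where ×_Z denotes the quotient of the product by the anti-diagonal Z-action and ×_{Z/K_Z} the quotient by the anti-diagonal Z/K_Z-action. -/
/-- Relation on `X × Y` whose quotient is `(X ×_Z Y)/K`: the anti-diagonal `Z`-relation
together with the `K`-relation on the `X`-component. -/
def relQuotLeft {G : Type*} [Group G] (Z K : Subgroup G) {X Y : Type*}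
    [MulAction G X] [MulAction ↥Z Y] : X × Y → X × Y → Prop :=
  fun a b =>
    (∃ z : Z, b = ((z : G) • a.1, z⁻¹ • a.2)) ∨
    (∃ k ∈ K, b = (k • a.1, a.2))

/-- Relation on `X × Y` whose quotient is `(X/K) ×_{Z/K_Z} (Y/K_Z)` where
`K_Z = K ∩ Z`: the `K`-relation on `X`, the `K_Z`-relation on `Y`, and the
anti-diagonal `Z`-relation (inducing the anti-diagonal `Z/K_Z`-relation). -/
def relQuotRight {G : Type*} [Group G] (Z K : Subgroup G) {X Y : Type*}
    [MulAction G X] [MulAction ↥Z Y] : X × Y → X × Y → Prop :=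
  fun a b =>
    (∃ z : Z, b = ((z : G) • a.1, z⁻¹ • a.2)) ∨
    (∃ k ∈ K, b = (k • a.1, a.2)) ∨
    (∃ z : Z, (z : G) ∈ K ∧ b = (a.1, z • a.2))

/-- for `Z` central in `G`, `K ≤ G`, `K_Z = K ∩ Z`, a right `G`-set `X`
and a set `Y` with a free `Z`-action, the canonical map
`(X ×_Z Y)/K → (X/K) ×_{Z/K_Z} (Y/K_Z)` (induced by the identity on representatives)
is a bijection. -/
theorem contracted_quotient_finite_level
    {G X Y : Type*} [Group G] (Z K : Subgroup G) (hZ : Z ≤ Subgroup.center G)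
    [MulAction G X] [MulAction ↥Z Y]
    (hYfree : ∀ (z : ↥Z) (y : Y), z • y = y → z = 1) :
    ∃ e : Quot (relQuotLeft Z K (X := X) (Y := Y)) ≃
        Quot (relQuotRight Z K (X := X) (Y := Y)),
      ∀ a : X × Y, e (Quot.mk _ a) = Quot.mk _ a := by
  have h1 : ∀ a b : X × Y, relQuotLeft Z K a b →
      Quot.mk (relQuotRight Z K) a = Quot.mk (relQuotRight Z K) b := by
    intro a b hab
    apply Quot.sound
    rcases hab with h | h
    · exact Or.inl h
    · exact Or.inr (Or.inl h)
  have h2 : ∀ a b : X × Y, relQuotRight Z K a b →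
      Quot.mk (relQuotLeft Z K) a = Quot.mk (relQuotLeft Z K) b := by
    intro a b hab
    rcases hab with h | h | ⟨z, hzK, hb⟩
    · exact Quot.sound (Or.inl h)
    · exact Quot.sound (Or.inr h)
    · have step1 : Quot.mk (relQuotLeft Z K) a
          = Quot.mk (relQuotLeft Z K) (((z⁻¹ : Z) : G) • a.1, z • a.2) := by
        apply Quot.sound
        exact Or.inl ⟨z⁻¹, by simp⟩
      have step2 : Quot.mk (relQuotLeft Z K) (((z⁻¹ : Z) : G) • a.1, z • a.2)
          = Quot.mk (relQuotLeft Z K) b := by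
        apply Quot.sound
        refine Or.inr ⟨(z : G), hzK, ?_⟩
        rw [hb]
        simp [smul_smul]
      exact step1.trans step2
  refine ⟨⟨Quot.lift (Quot.mk _) h1, Quot.lift (Quot.mk _) h2, ?_, ?_⟩, fun a => rfl⟩
  · intro q; induction q using Quot.ind; rfl
  · intro q; induction q using Quot.ind; rfl
end
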